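/- arXiv:2102.09423 — 6 statements merged into one kernel-verified Lean document; each statement's English description precedes it below -/
import Mathlib

section
/- Let ω ∈ ℝⁿ with |ω| = 1 and let H be a symmetric n×n real matrix. Then Hω · ((2I − ω⊗ω)(Hω)) = 2|Hω|² − |ω·Hω|² ≤ |H|², where |H| is the Frobenius norm. -/
open Matrix

theorem stmt1 {n : ℕ} (ω : Fin n → ℝ) (hω : ∑ i, ω i ^ 2 = 1)
    (H : Matrix (Fin n) (Fin n) ℝ) (hH : H.IsSymm) :
    (∑ i, H.mulVec ω i *
        ((2 • (1 : Matrix (Fin n) (Fin n) ℝ) - vecMulVec ω ω).mulVec (H.mulVec ω) i))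
      = 2 * (∑ i, (H.mulVec ω i) ^ 2) - (∑ i, ω i * H.mulVec ω i) ^ 2
    ∧ 2 * (∑ i, (H.mulVec ω i) ^ 2) - (∑ i, ω i * H.mulVec ω i) ^ 2
        ≤ ∑ i, ∑ j, H i j ^ 2 := by
  set v : Fin n → ℝ := H.mulVec ω with hv
  set l : ℝ := ∑ i, ω i * v i with hl
  set V : ℝ := ∑ i, v i ^ 2 with hV
  have hsym : ∀ i j, H i j = H j i := by
    intro i j
    have := congrFun (congrFun hH.eq j) i
    simpa [Matrix.transpose_apply] using this
  have hvdef : ∀ i, v i = ∑ j, H i j * ω j := by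
    intro i; simp [hv, Matrix.mulVec, dotProduct]
  -- first part
  have part1 : (∑ i, v i *
        ((2 • (1 : Matrix (Fin n) (Fin n) ℝ) - vecMulVec ω ω).mulVec v i))
      = 2 * V - l ^ 2 := by
    have hmv : ∀ i, (2 • (1 : Matrix (Fin n) (Fin n) ℝ) - vecMulVec ω ω).mulVec v i
        = 2 * v i - ω i * l := by
      intro i
      simp only [Matrix.mulVec, dotProduct, Matrix.sub_apply, Matrix.smul_apply,
        Matrix.one_apply, Matrix.vecMulVec_apply, smul_ite, smul_zero, sub_mul, ite_mul,
        zero_mul, Finset.sum_sub_distrib, Finset.sum_ite_eq, Finset.mem_univ, if_true,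
        smul_eq_mul, mul_one]
      rw [hl, Finset.mul_sum]
      congr 1
      · norm_num
      · exact Finset.sum_congr rfl fun j _ => by ring
    calc ∑ i, v i * ((2 • (1 : Matrix (Fin n) (Fin n) ℝ) - vecMulVec ω ω).mulVec v i)
        = ∑ i, (2 * v i ^ 2 - l * (ω i * v i)) := by
          refine Finset.sum_congr rfl fun i _ => ?_
          rw [hmv i]; ring
      _ = 2 * V - l * l := by
          rw [Finset.sum_sub_distrib, ← Finset.mul_sum, ← Finset.mul_sum, hV, hl]
      _ = 2 * V - l ^ 2 := by ring
  refine ⟨part1, ?_⟩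
  -- second part
  set w : Fin n → ℝ := H.mulVec v with hw
  have hwdef : ∀ i, w i = ∑ j, H i j * v j := by
    intro i; simp [hw, Matrix.mulVec, dotProduct]
  have hωw : ∑ i, ω i * w i = V := by
    calc ∑ i, ω i * w i = ∑ i, ∑ j, ω i * (H i j * v j) := by
          simp_rw [hwdef, Finset.mul_sum]
      _ = ∑ j, ∑ i, ω i * (H i j * v j) := Finset.sum_comm
      _ = ∑ j, v j * ∑ i, H j i * ω i := by
          refine Finset.sum_congr rfl fun j _ => ?_
          rw [Finset.mul_sum]
          refine Finset.sum_congr rfl fun i _ => ?_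
          rw [hsym i j]; ring
      _ = ∑ j, v j ^ 2 := by
          refine Finset.sum_congr rfl fun j _ => ?_
          rw [← hvdef j]; ring
  have key : ∑ i, ∑ j, (H i j - (v i * ω j + ω i * v j - l * (ω i * ω j))) ^ 2
      = (∑ i, ∑ j, H i j ^ 2) - (2 * V - l ^ 2) := by
    have inner : ∀ i, ∑ j, (H i j - (v i * ω j + ω i * v j - l * (ω i * ω j))) ^ 2
        = (∑ j, H i j ^ 2) + (-2 * v i + 2 * l * ω i) * v i + (-2 * ω i) * w i
          + (v i ^ 2 + l ^ 2 * ω i ^ 2 - 2 * l * v i * ω i) * 1 + ω i ^ 2 * V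
          + (2 * v i * ω i - 2 * l * ω i ^ 2) * l := by
      intro i
      have expand : ∀ j, (H i j - (v i * ω j + ω i * v j - l * (ω i * ω j))) ^ 2
          = H i j ^ 2 + (-2 * v i + 2 * l * ω i) * (H i j * ω j)
            + (-2 * ω i) * (H i j * v j)
            + (v i ^ 2 + l ^ 2 * ω i ^ 2 - 2 * l * v i * ω i) * ω j ^ 2
            + ω i ^ 2 * v j ^ 2
            + (2 * v i * ω i - 2 * l * ω i ^ 2) * (ω j * v j) := by
        intro j; ring
      rw [Finset.sum_congr rfl fun j _ => expand j]
      rw [Finset.sum_add_distrib, Finset.sum_add_distrib, Finset.sum_add_distrib,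
        Finset.sum_add_distrib, Finset.sum_add_distrib,
        ← Finset.mul_sum, ← Finset.mul_sum, ← Finset.mul_sum, ← Finset.mul_sum,
        ← Finset.mul_sum, ← hvdef, ← hwdef, hω, hV, hl]
    rw [Finset.sum_congr rfl fun i _ => inner i]
    rw [Finset.sum_add_distrib, Finset.sum_add_distrib, Finset.sum_add_distrib,
      Finset.sum_add_distrib, Finset.sum_add_distrib]
    have s1 : ∑ i, (-2 * v i + 2 * l * ω i) * v i = -2 * V + 2 * l * l := by
      have : ∀ i, (-2 * v i + 2 * l * ω i) * v i
          = -2 * v i ^ 2 + 2 * l * (ω i * v i) := fun i => by ring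
      rw [Finset.sum_congr rfl fun i _ => this i, Finset.sum_add_distrib,
        ← Finset.mul_sum, ← Finset.mul_sum, hV, hl]
    have s2 : ∑ i, (-2 * ω i) * w i = -2 * V := by
      have : ∀ i, (-2 * ω i) * w i = -2 * (ω i * w i) := fun i => by ring
      rw [Finset.sum_congr rfl fun i _ => this i, ← Finset.mul_sum, hωw]
    have s3 : ∑ i, (v i ^ 2 + l ^ 2 * ω i ^ 2 - 2 * l * v i * ω i) * 1
        = V + l ^ 2 - 2 * l * l := by
      have : ∀ i, (v i ^ 2 + l ^ 2 * ω i ^ 2 - 2 * l * v i * ω i) * 1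
          = v i ^ 2 + l ^ 2 * ω i ^ 2 - 2 * l * (ω i * v i) := fun i => by ring
      rw [Finset.sum_congr rfl fun i _ => this i, Finset.sum_sub_distrib,
        Finset.sum_add_distrib, ← Finset.mul_sum, ← Finset.mul_sum, hV, hl, hω]
      ring
    have s4 : ∑ i, ω i ^ 2 * V = V := by
      rw [← Finset.sum_mul, hω, one_mul]
    have s5 : ∑ i, (2 * v i * ω i - 2 * l * ω i ^ 2) * l = 2 * l * l - 2 * l ^ 2 := by
      have : ∀ i, (2 * v i * ω i - 2 * l * ω i ^ 2) * l
          = 2 * l * (ω i * v i) - 2 * l ^ 2 * ω i ^ 2 := fun i => by ring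
      rw [Finset.sum_congr rfl fun i _ => this i, Finset.sum_sub_distrib,
        ← Finset.mul_sum, ← Finset.mul_sum, hl, hω]
      ring
    rw [s1, s2, s3, s4, s5]
    ring
  have nonneg : (0:ℝ) ≤ ∑ i, ∑ j, (H i j - (v i * ω j + ω i * v j - l * (ω i * ω j))) ^ 2 :=
    Finset.sum_nonneg fun i _ => Finset.sum_nonneg fun j _ => sq_nonneg _
  have hl2 : (∑ i, ω i * v i) ^ 2 = l ^ 2 := by rw [hl]
  linarith [key ▸ nonneg]
end

section
/- Let ω ∈ ℝⁿ. The set E(ω) = { Hω : H symmetric n×n real matrix with Frobenius norm |H| ≤ 1 } equals the ellipsoid F(W(ω)) = { x ∈ ℝⁿ : x · W(ω)⁻¹ x ≤ 1 } when ω ≠ 0, where W(ω) = (1/2)(|ω|² I + ω⊗ω). In particular, for any symmetric matrix H, Hω ∈ |H|·F(W(ω)). -/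
/-!
Write `a = |ω|²`. By Sherman–Morrison, `W(ω)⁻¹ = (2/a) I - a⁻² ω⊗ω`, so
`x · W⁻¹ x = (2a|x|² - (ω·x)²) / a²`. This is exactly `|L|²` for the symmetric matrix
`L = ω⊗v + v⊗ω`, with `v ∈ span {x, ω}` chosen so that `L ω = x`. If `H` is any symmetric matrix
with `H ω = x`, then `H - L` is symmetric and kills `ω`, hence is Frobenius-orthogonal to every
`ω⊗v + v⊗ω`; by Pythagoras `|H|² ≥ |L|² = x · W⁻¹ x`. So `L` is the least-norm symmetric
solution, which gives both inclusions, and the last claim follows by homogeneity.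
-/

open Matrix Pointwise

section

variable {m ι : Type*}

def symmOuter (u v : ι → ℝ) : Matrix ι ι ℝ := vecMulVec u v + vecMulVec v u

lemma isSymm_symmOuter (u v : ι → ℝ) : (symmOuter u v).IsSymm := by
  simp [symmOuter, IsSymm, add_comm]

variable [Fintype m] [Fintype ι]

lemma sum_sq_eq_dotProduct_self (v : ι → ℝ) : ∑ i, v i ^ 2 = v ⬝ᵥ v := by
  simp [dotProduct, sq]

lemma eq_zero_of_sum_sum_sq_eq_zero {A : Matrix m ι ℝ} (h : ∑ i, ∑ j, A i j ^ 2 = 0) :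
    A = 0 := by
  have hrow := (Fintype.sum_eq_zero_iff_of_nonneg fun i => by positivity).1 h
  ext i j
  have hA := (Fintype.sum_eq_zero_iff_of_nonneg fun j => sq_nonneg (A i j)).1 (congrFun hrow i)
  exact pow_eq_zero_iff two_ne_zero |>.1 (congrFun hA j)

lemma sum_sum_sq_le_sum_sum_add_sq (A B : Matrix m ι ℝ) (h : ∑ i, ∑ j, A i j * B i j = 0) :
    ∑ i, ∑ j, A i j ^ 2 ≤ ∑ i, ∑ j, (A + B) i j ^ 2 := by
  have hexp : ∑ i, ∑ j, (A + B) i j ^ 2 = ∑ i, ∑ j, A i j ^ 2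
      + 2 * ∑ i, ∑ j, A i j * B i j + ∑ i, ∑ j, B i j ^ 2 := by
    simp only [Matrix.add_apply, Finset.mul_sum, ← Finset.sum_add_distrib]
    exact Finset.sum_congr rfl fun i _ => Finset.sum_congr rfl fun j _ => by ring
  have hB : 0 ≤ ∑ i, ∑ j, B i j ^ 2 := by positivity
  linarith

lemma symmOuter_mulVec (u v w : ι → ℝ) :
    symmOuter u v *ᵥ w = (v ⬝ᵥ w) • u + (u ⬝ᵥ w) • v := by
  simp [symmOuter, add_mulVec, vecMulVec_mulVec]

lemma sum_sum_symmOuter_sq (u v : ι → ℝ) :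
    ∑ i, ∑ j, symmOuter u v i j ^ 2 = 2 * (u ⬝ᵥ u) * (v ⬝ᵥ v) + 2 * (u ⬝ᵥ v) ^ 2 := by
  calc ∑ i, ∑ j, symmOuter u v i j ^ 2
      = ∑ i, ∑ j, (u i ^ 2 * v j ^ 2 + v i ^ 2 * u j ^ 2 + 2 * (u i * v i) * (u j * v j)) :=
        Finset.sum_congr rfl fun i _ => Finset.sum_congr rfl fun j _ => by
          simp only [symmOuter, Matrix.add_apply, vecMulVec_apply]; ring
    _ = _ := by
        simp only [Finset.sum_add_distrib, ← Finset.mul_sum, ← Finset.sum_mul,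
          sum_sq_eq_dotProduct_self]
        simp only [dotProduct]
        ring

lemma sum_sum_symmOuter_mul_eq_zero {D : Matrix ι ι ℝ} {u : ι → ℝ} (hD : D.IsSymm)
    (hDu : D *ᵥ u = 0) (v : ι → ℝ) : ∑ i, ∑ j, symmOuter u v i j * D i j = 0 := by
  have huD : u ᵥ* D = 0 := by rw [← hD.eq, vecMul_transpose, hDu]
  calc ∑ i, ∑ j, symmOuter u v i j * D i j = u ᵥ* D ⬝ᵥ v + v ⬝ᵥ D *ᵥ u := by
        simp only [symmOuter, Matrix.add_apply, vecMulVec_apply, dotProduct, vecMul, mulVec,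
          Finset.mul_sum, Finset.sum_mul, add_mul, Finset.sum_add_distrib]
        congr 1
        · rw [Finset.sum_comm]
          exact Finset.sum_congr rfl fun i _ => Finset.sum_congr rfl fun j _ => by ring
        · exact Finset.sum_congr rfl fun i _ => Finset.sum_congr rfl fun j _ => by ring
    _ = 0 := by rw [huD, hDu, zero_dotProduct, dotProduct_zero, add_zero]

noncomputable def leastSymmSolution (ω x : ι → ℝ) : Matrix ι ι ℝ :=
  symmOuter ω ((ω ⬝ᵥ ω)⁻¹ • x - ((ω ⬝ᵥ x) / (2 * (ω ⬝ᵥ ω) ^ 2)) • ω)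

variable {ω : ι → ℝ}

lemma leastSymmSolution_mulVec (hω : ω ≠ 0) (x : ι → ℝ) : leastSymmSolution ω x *ᵥ ω = x := by
  have ha : ω ⬝ᵥ ω ≠ 0 := dotProduct_self_eq_zero.not.2 hω
  ext i
  simp only [leastSymmSolution, symmOuter_mulVec, sub_dotProduct, smul_dotProduct,
    dotProduct_comm x ω, Pi.add_apply, Pi.sub_apply, Pi.smul_apply, smul_eq_mul]
  field_simp
  ring

lemma sum_sum_leastSymmSolution_sq (hω : ω ≠ 0) (x : ι → ℝ) :
    ∑ i, ∑ j, leastSymmSolution ω x i j ^ 2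
      = (2 * (ω ⬝ᵥ ω) * (x ⬝ᵥ x) - (ω ⬝ᵥ x) ^ 2) / (ω ⬝ᵥ ω) ^ 2 := by
  have ha : ω ⬝ᵥ ω ≠ 0 := dotProduct_self_eq_zero.not.2 hω
  simp only [leastSymmSolution, sum_sum_symmOuter_sq, sub_dotProduct, dotProduct_sub,
    smul_dotProduct, dotProduct_smul, dotProduct_comm x ω, smul_eq_mul]
  field_simp
  ring

lemma sum_sum_leastSymmSolution_sq_le (hω : ω ≠ 0) {H : Matrix ι ι ℝ} (hH : H.IsSymm) :
    ∑ i, ∑ j, leastSymmSolution ω (H *ᵥ ω) i j ^ 2 ≤ ∑ i, ∑ j, H i j ^ 2 := by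
  set L := leastSymmSolution ω (H *ᵥ ω)
  have hD : (H - L).IsSymm := hH.sub (isSymm_symmOuter _ _)
  have hDω : (H - L) *ᵥ ω = 0 := by rw [sub_mulVec, leastSymmSolution_mulVec hω, sub_self]
  simpa using sum_sum_sq_le_sum_sum_add_sq L (H - L) (sum_sum_symmOuter_mul_eq_zero hD hDω _)

variable [DecidableEq ι]

noncomputable def ellipsoidMatrix (ω : ι → ℝ) : Matrix ι ι ℝ :=
  (1/2 : ℝ) • ((∑ i, ω i ^ 2) • (1 : Matrix ι ι ℝ) + vecMulVec ω ω)

lemma inv_ellipsoidMatrix (hω : ω ≠ 0) :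
    (ellipsoidMatrix ω)⁻¹ = (2 / (ω ⬝ᵥ ω)) • 1 - ((ω ⬝ᵥ ω) ^ 2)⁻¹ • vecMulVec ω ω := by
  have ha : ω ⬝ᵥ ω ≠ 0 := dotProduct_self_eq_zero.not.2 hω
  refine inv_eq_right_inv ?_
  ext i j
  simp only [ellipsoidMatrix, one_div, sum_sq_eq_dotProduct_self, smul_add, mul_sub,
    Algebra.mul_smul_comm, mul_one, add_mul, Algebra.smul_mul_assoc, one_mul,
    vecMulVec_mul_vecMulVec, vecMulVec_smul, Matrix.sub_apply, Matrix.add_apply,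
    Matrix.smul_apply, one_apply, smul_eq_mul, mul_ite, mul_zero]
  split_ifs <;> field_simp <;> ring

lemma dotProduct_inv_ellipsoidMatrix_mulVec (hω : ω ≠ 0) (x : ι → ℝ) :
    x ⬝ᵥ (ellipsoidMatrix ω)⁻¹ *ᵥ x = ∑ i, ∑ j, leastSymmSolution ω x i j ^ 2 := by
  have ha : ω ⬝ᵥ ω ≠ 0 := dotProduct_self_eq_zero.not.2 hω
  rw [inv_ellipsoidMatrix hω, sum_sum_leastSymmSolution_sq hω, sub_mulVec, smul_mulVec,
    smul_mulVec, one_mulVec, vecMulVec_mulVec, op_smul_eq_smul, dotProduct_sub, dotProduct_smul,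
    dotProduct_smul, dotProduct_smul, dotProduct_comm x ω, smul_eq_mul, smul_eq_mul, smul_eq_mul]
  field_simp

end

theorem stmt3 {n : ℕ} (ω : Fin n → ℝ) :
    let W : Matrix (Fin n) (Fin n) ℝ :=
      (1/2 : ℝ) • ((∑ i, ω i ^ 2) • (1 : Matrix (Fin n) (Fin n) ℝ) + vecMulVec ω ω)
    let F : Set (Fin n → ℝ) := {x | ∑ i, x i * (W⁻¹).mulVec x i ≤ 1}
    (ω ≠ 0 →
      {x | ∃ H : Matrix (Fin n) (Fin n) ℝ,
          H.IsSymm ∧ (∑ i, ∑ j, H i j ^ 2) ≤ 1 ∧ x = H.mulVec ω} = F)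
    ∧ ∀ H : Matrix (Fin n) (Fin n) ℝ, H.IsSymm →
        H.mulVec ω ∈ Real.sqrt (∑ i, ∑ j, H i j ^ 2) • F := by
  intro W F
  have mem_F (x : Fin n → ℝ) : x ∈ F ↔ x ⬝ᵥ (ellipsoidMatrix ω)⁻¹ *ᵥ x ≤ 1 := Iff.rfl
  have form_le (hω : ω ≠ 0) {H : Matrix (Fin n) (Fin n) ℝ} (hH : H.IsSymm) :
      H *ᵥ ω ⬝ᵥ (ellipsoidMatrix ω)⁻¹ *ᵥ (H *ᵥ ω) ≤ ∑ i, ∑ j, H i j ^ 2 := by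
    rw [dotProduct_inv_ellipsoidMatrix_mulVec hω]
    exact sum_sum_leastSymmSolution_sq_le hω hH
  refine ⟨fun hω => Set.ext fun x => ⟨?_, fun hx => ?_⟩, fun H hH => ?_⟩
  · rintro ⟨H, hH, hH1, rfl⟩
    exact (mem_F _).2 ((form_le hω hH).trans hH1)
  · refine ⟨leastSymmSolution ω x, isSymm_symmOuter _ _, ?_, (leastSymmSolution_mulVec hω x).symm⟩
    rwa [← dotProduct_inv_ellipsoidMatrix_mulVec hω, ← mem_F]
  by_cases hHω : H *ᵥ ω = 0
  · rw [hHω]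
    exact Set.zero_mem_smul_set (by simp [mem_F])
  have hω : ω ≠ 0 := by
    rintro rfl
    exact hHω (mulVec_zero H)
  have hS : 0 < ∑ i, ∑ j, H i j ^ 2 := (by positivity : (0 : ℝ) ≤ _).lt_of_ne fun h =>
    hHω (by rw [eq_zero_of_sum_sum_sq_eq_zero h.symm, zero_mulVec])
  set c := √(∑ i, ∑ j, H i j ^ 2)
  have hc : 0 < c := Real.sqrt_pos.2 hS
  refine Set.mem_smul_set.2 ⟨c⁻¹ • H *ᵥ ω, ?_, smul_inv_smul₀ hc.ne' _⟩
  rw [mem_F, mulVec_smul, dotProduct_smul, smul_dotProduct, smul_eq_mul, smul_eq_mul,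
    ← mul_assoc, ← mul_inv, ← sq, Real.sq_sqrt hS.le, inv_mul_le_one₀ hS]
  exact form_le hω hH
end

section
/- Let N ≥ 2, 0 ≤ δ ≤ 1/2, δ + σ ≥ 1. Let ω¹,…,ω^N ∈ ℝⁿ with Σ|ω^α|² ≤ 1 and symmetric n×n matrices H¹,…,H^N with Σ|H^α|² ≤ 1 (Frobenius norms). Set J = |Σ_α H^α ω^α|², J₀ = Σ_α |ω^α · Σ_β H^β ω^β|², J₁ = Σ_α |H^α|². Then J − δ J₀ − σ J₁ ≤ 0 if δ ∈ [0, 1/3], and J − δ J₀ − σ J₁ ≤ max{0, (δ+1)²/(8δ) − σ} if δ ∈ (1/3, 1/2]. -/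
open Matrix Finset

-- L1: decomposition of squared norm along unit vector e
lemma aux_decomp {n : ℕ} (e f : Fin n → ℝ) (he : ∑ i, e i ^ 2 = 1) :
    ∑ i, f i ^ 2 = (∑ i, f i * e i) ^ 2 + ∑ i, (f i - (∑ j, f j * e j) * e i) ^ 2 := by
  set a := ∑ j, f j * e j with ha
  have h1 : ∀ i, (f i - a * e i) ^ 2 = f i ^ 2 - 2 * a * (f i * e i) + a ^ 2 * e i ^ 2 := by
    intro i; ring
  simp_rw [h1, Finset.sum_add_distrib, Finset.sum_sub_distrib, ← Finset.mul_sum, he, ← ha]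
  ring

-- L2: inner product decomposition
lemma aux_inner {n : ℕ} (e f g : Fin n → ℝ) (he : ∑ i, e i ^ 2 = 1) :
    ∑ i, f i * g i = (∑ i, f i * e i) * (∑ i, g i * e i) +
      ∑ i, (f i - (∑ j, f j * e j) * e i) * (g i - (∑ j, g j * e j) * e i) := by
  set a := ∑ j, f j * e j with ha
  set b := ∑ j, g j * e j with hb
  have h1 : ∀ i, (f i - a * e i) * (g i - b * e i)
      = f i * g i - a * (g i * e i) - b * (f i * e i) + a * b * e i ^ 2 := by
    intro i; ring
  simp_rw [h1, Finset.sum_add_distrib, Finset.sum_sub_distrib, ← Finset.mul_sum, he, ← ha, ← hb]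
  ring

lemma aux_symm_shift {n : ℕ} (M : Matrix (Fin n) (Fin n) ℝ) (hM : M.IsSymm)
    (x y : Fin n → ℝ) : ∑ i, M.mulVec x i * y i = ∑ i, x i * M.mulVec y i := by
  simp only [Matrix.mulVec, dotProduct, Finset.sum_mul, Finset.mul_sum]
  rw [Finset.sum_comm]
  refine Finset.sum_congr rfl fun j _ => Finset.sum_congr rfl fun i _ => ?_
  rw [← hM.apply i j]; ring

lemma aux_frob {n : ℕ} (M : Matrix (Fin n) (Fin n) ℝ) (hM : M.IsSymm)
    (e : Fin n → ℝ) (he : ∑ i, e i ^ 2 = 1) :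
    (∑ i, M.mulVec e i * e i) ^ 2
      + 2 * ∑ i, (M.mulVec e i - (∑ j, M.mulVec e j * e j) * e i) ^ 2
    ≤ ∑ i, ∑ j, M i j ^ 2 := by
  set g : Fin n → ℝ := M.mulVec e with hg
  set h : ℝ := ∑ i, g i * e i with hh
  set u : Fin n → ℝ := fun i => g i - h * e i with hu
  set p : Fin n → Fin n → ℝ := fun i j => M i j - g i * e j with hp
  have hgi : ∀ i, ∑ j, M i j * e j = g i := by
    intro i; rw [hg]; simp [Matrix.mulVec, dotProduct]
  -- rows decomposition
  have step1 : ∑ i, ∑ j, M i j ^ 2 = ∑ i, g i ^ 2 + ∑ i, ∑ j, p i j ^ 2 := by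
    rw [← Finset.sum_add_distrib]
    refine Finset.sum_congr rfl fun i _ => ?_
    have := aux_decomp e (fun j => M i j) he
    simpa [hgi i, hp] using this
  have step2 : ∑ i, g i ^ 2 = h ^ 2 + ∑ i, u i ^ 2 := by
    have := aux_decomp e g he
    simpa [← hh, hu] using this
  have step3 : ∀ j, u j = ∑ i, e i * p i j := by
    intro j
    have h1 : ∑ i, e i * p i j = (∑ i, M i j * e i) - h * e j := by
      simp only [hp, hh, mul_sub, Finset.sum_sub_distrib, Finset.sum_mul]
      congr 1
      · exact Finset.sum_congr rfl fun i _ => by ring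
      · exact Finset.sum_congr rfl fun i _ => by ring
    have h2 : ∑ i, M i j * e i = g j := by
      rw [← hgi j]
      exact Finset.sum_congr rfl fun i _ => by rw [← hM.apply j i]
    rw [hu]; rw [h1, h2]
  have step4 : ∑ j, u j ^ 2 ≤ ∑ i, ∑ j, p i j ^ 2 := by
    rw [Finset.sum_comm]
    refine Finset.sum_le_sum fun j _ => ?_
    rw [step3 j]
    calc (∑ i, e i * p i j) ^ 2 ≤ (∑ i, e i ^ 2) * ∑ i, p i j ^ 2 :=
          Finset.sum_mul_sq_le_sq_mul_sq _ _ _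
      _ = ∑ i, p i j ^ 2 := by rw [he, one_mul]
  have : (∑ i, g i * e i) = h := hh.symm
  calc (∑ i, M.mulVec e i * e i) ^ 2
        + 2 * ∑ i, (M.mulVec e i - (∑ j, M.mulVec e j * e j) * e i) ^ 2
      = h ^ 2 + 2 * ∑ i, u i ^ 2 := by rw [← hh, hu]
    _ ≤ h ^ 2 + ∑ i, u i ^ 2 + ∑ i, ∑ j, p i j ^ 2 := by
        have := Finset.sum_nonneg (fun i (_ : i ∈ Finset.univ) => sq_nonneg (u i))
        linarith [step4]
    _ = ∑ i, ∑ j, M i j ^ 2 := by rw [step1, step2]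

set_option maxHeartbeats 1000000 in
lemma aux_scalar (δ σ A₂ W₂ H₂ U₂ S1 S2 t J1 : ℝ)
    (hδ0 : 0 ≤ δ) (hδ : δ ≤ 1/2) (hσ : 1 ≤ δ + σ)
    (hA : 0 ≤ A₂) (hW : 0 ≤ W₂) (hH2 : 0 ≤ H₂) (hU : 0 ≤ U₂)
    (hAW : A₂ + W₂ ≤ 1) (hHU : H₂ + 2*U₂ ≤ J1) (hJ1 : J1 ≤ 1)
    (ht : t = S1 + S2) (hS1 : S1^2 ≤ A₂*H₂) (hS2 : S2^2 ≤ W₂*U₂) :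
    (δ ≤ 1/3 → t^2 - δ*(t^2*A₂) - σ*J1 ≤ 0) ∧
    (1/3 < δ → t^2 - δ*(t^2*A₂) - σ*J1 ≤ max 0 ((δ+1)^2/(8*δ) - σ)) := by
  have hJ10 : 0 ≤ J1 := by linarith
  have hR0 : 0 ≤ 2*(A₂*U₂) + (W₂*H₂)/2 := by positivity
  have hprod : S1^2 * S2^2 ≤ (A₂*H₂) * (W₂*U₂) :=
    mul_le_mul hS1 hS2 (sq_nonneg _) (by positivity)
  have hcross : 2*(S1*S2) ≤ 2*(A₂*U₂) + (W₂*H₂)/2 := by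
    nlinarith [sq_nonneg (2*(A₂*U₂) - (W₂*H₂)/2), sq_nonneg (S1*S2), hprod, hR0]
  have key : t^2 ≤ (A₂ + W₂/2) * (H₂ + 2*U₂) := by
    rw [ht]; nlinarith [hS1, hS2, hcross]
  have hx1 : A₂ ≤ 1 := by linarith
  have hδA : δ*A₂ ≤ δ := by nlinarith
  have h1x : 0 ≤ 1 - δ*A₂ := by nlinarith
  have hs0 : 0 ≤ H₂ + 2*U₂ := by linarith
  set s : ℝ := H₂ + 2*U₂ with hs
  have h1 : A₂ + W₂/2 ≤ (1+A₂)/2 := by linarith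
  have h2 : t^2 ≤ (1+A₂)/2 * s := le_trans key (mul_le_mul_of_nonneg_right h1 hs0)
  have key2 : t^2 * (1 - δ*A₂) ≤ s * ((1+A₂)*(1-δ*A₂)/2) := by
    calc t^2 * (1 - δ*A₂) ≤ ((1+A₂)/2 * s) * (1 - δ*A₂) :=
          mul_le_mul_of_nonneg_right h2 h1x
      _ = s * ((1+A₂)*(1-δ*A₂)/2) := by ring
  constructor
  · intro hd3
    have hpos : (0:ℝ) ≤ 1 - δ*(A₂+2) := by nlinarith
    have hq : (1+A₂)*(1-δ*A₂)/2 ≤ 1-δ := by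
      nlinarith [mul_nonneg (sub_nonneg.2 hx1) hpos]
    have hmain : t^2 * (1 - δ*A₂) ≤ σ * J1 := by
      calc t^2 * (1 - δ*A₂) ≤ s * ((1+A₂)*(1-δ*A₂)/2) := key2
        _ ≤ s * (1-δ) := mul_le_mul_of_nonneg_left hq hs0
        _ ≤ J1 * (1-δ) := mul_le_mul_of_nonneg_right hHU (by linarith)
        _ = (1-δ) * J1 := by ring
        _ ≤ σ * J1 := mul_le_mul_of_nonneg_right (by linarith) hJ10
    have hr : t^2 - δ*(t^2*A₂) - σ*J1 = t^2 * (1 - δ*A₂) - σ*J1 := by ring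
    linarith [hmain]
  · intro hd3
    have hδp : (0:ℝ) < 8*δ := by linarith
    obtain ⟨M, hMdef⟩ : ∃ M : ℝ, M = (δ+1)^2/(8*δ) := ⟨_, rfl⟩
    rw [← hMdef]
    have hM : (1+A₂)*(1-δ*A₂)/2 ≤ M := by
      rw [hMdef, div_le_div_iff₀ (by norm_num) hδp]
      nlinarith [sq_nonneg (1 - δ - 2*δ*A₂)]
    have ha : t^2 * (1 - δ*A₂) ≤ s * M := le_trans key2 (mul_le_mul_of_nonneg_left hM hs0)
    have hb : σ * s ≤ σ * J1 := mul_le_mul_of_nonneg_left hHU (by linarith)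
    have hstep : t^2 * (1 - δ*A₂) - σ*J1 ≤ s * (M - σ) := by
      linarith [(by ring : s*(M-σ) = s*M - σ*s)]
    have hfin : s * (M - σ) ≤ max 0 (M - σ) := by
      rcases le_or_gt (M - σ) 0 with h | h
      · exact le_trans (mul_nonpos_of_nonneg_of_nonpos hs0 h) (le_max_left _ _)
      · have hs1 : s ≤ 1 := by linarith
        calc s * (M - σ) ≤ 1 * (M - σ) := mul_le_mul_of_nonneg_right hs1 h.le
          _ ≤ max 0 (M - σ) := by rw [one_mul]; exact le_max_right _ _
    have hr : t^2 - δ*(t^2*A₂) - σ*J1 = t^2 * (1 - δ*A₂) - σ*J1 := by ring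
    linarith [hstep, hfin]

set_option maxHeartbeats 4000000 in
theorem stmt6 {n N : ℕ} (hN : 2 ≤ N) (δ σ : ℝ)
    (hδ0 : 0 ≤ δ) (hδ : δ ≤ 1/2) (hσ : 1 ≤ δ + σ)
    (ω : Fin N → Fin n → ℝ) (H : Fin N → Matrix (Fin n) (Fin n) ℝ)
    (hsym : ∀ α, (H α).IsSymm)
    (hω : ∑ α, ∑ i, (ω α i) ^ 2 ≤ 1)
    (hH : ∑ α, ∑ i, ∑ j, (H α i j) ^ 2 ≤ 1) :
    let J : ℝ := ∑ i, (∑ α, (H α).mulVec (ω α) i) ^ 2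
    let J0 : ℝ := ∑ α, (∑ i, ω α i * (∑ β, (H β).mulVec (ω β) i)) ^ 2
    let J1 : ℝ := ∑ α, ∑ i, ∑ j, (H α i j) ^ 2
    (δ ≤ 1/3 → J - δ * J0 - σ * J1 ≤ 0) ∧
    (1/3 < δ → J - δ * J0 - σ * J1 ≤ max 0 ((δ+1)^2/(8*δ) - σ)) := by
  intro J J0 J1
  have hJdef : J = ∑ i, (∑ α, (H α).mulVec (ω α) i) ^ 2 := rfl
  have hJ0def : J0 = ∑ α, (∑ i, ω α i * (∑ β, (H β).mulVec (ω β) i)) ^ 2 := rfl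
  have hJ1def : J1 = ∑ α, ∑ i, ∑ j, (H α i j) ^ 2 := rfl
  have hJ1le : J1 ≤ 1 := by rw [hJ1def]; exact hH
  have hJ1nn : 0 ≤ J1 := by
    rw [hJ1def]
    exact Finset.sum_nonneg fun α _ => Finset.sum_nonneg fun i _ =>
      Finset.sum_nonneg fun j _ => sq_nonneg _
  have hσ0 : (0:ℝ) ≤ σ := by linarith
  have hJnn : 0 ≤ J := by
    rw [hJdef]; exact Finset.sum_nonneg fun i _ => sq_nonneg _
  have hJ0nn : 0 ≤ J0 := by
    rw [hJ0def]; exact Finset.sum_nonneg fun α _ => sq_nonneg _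
  have hmax : (0:ℝ) ≤ max 0 ((δ+1)^2/(8*δ) - σ) := le_max_left _ _
  by_cases hJz : J = 0
  · constructor <;> intro _ <;> rw [hJz] <;> nlinarith [mul_nonneg hδ0 hJ0nn, mul_nonneg hσ0 hJ1nn]
  -- main case : J > 0
  have hJpos : 0 < J := lt_of_le_of_ne hJnn (Ne.symm hJz)
  set v : Fin n → ℝ := fun i => ∑ α, (H α).mulVec (ω α) i with hvdef
  have hJv : J = ∑ i, v i ^ 2 := hJdef
  set t : ℝ := Real.sqrt J with htdef
  have ht0 : 0 < t := Real.sqrt_pos.2 hJpos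
  have ht2 : t ^ 2 = J := Real.sq_sqrt hJnn
  set e : Fin n → ℝ := fun i => v i / t with hedef
  have hve : ∀ i, v i = t * e i := by
    intro i; rw [hedef]; field_simp
  have he : ∑ i, e i ^ 2 = 1 := by
    have h1 : ∑ i, e i ^ 2 = (∑ i, v i ^ 2) / t ^ 2 := by
      rw [Finset.sum_div]
      exact Finset.sum_congr rfl fun i _ => by rw [hedef, div_pow]
    rw [h1, ← hJv, ← ht2, div_self (pow_ne_zero 2 (ne_of_gt ht0))]
  set a : Fin N → ℝ := fun α => ∑ i, ω α i * e i with hadef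
  set hc : Fin N → ℝ := fun α => ∑ i, (H α).mulVec e i * e i with hcdef
  set w : Fin N → Fin n → ℝ := fun α i => ω α i - a α * e i with hwdef
  set u : Fin N → Fin n → ℝ := fun α i => (H α).mulVec e i - hc α * e i with hudef
  set A₂ : ℝ := ∑ α, a α ^ 2 with hA2def
  set W₂ : ℝ := ∑ α, ∑ i, w α i ^ 2 with hW2def
  set H₂ : ℝ := ∑ α, hc α ^ 2 with hH2def
  set U₂ : ℝ := ∑ α, ∑ i, u α i ^ 2 with hU2def
  set S1 : ℝ := ∑ α, a α * hc α with hS1def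
  set S2 : ℝ := ∑ α, ∑ i, w α i * u α i with hS2def
  -- scaling of mulVec
  have hHv : ∀ α i, (H α).mulVec v i = t * (H α).mulVec e i := by
    intro α i
    simp only [Matrix.mulVec, dotProduct, Finset.mul_sum]
    exact Finset.sum_congr rfl fun j _ => by rw [hve j]; ring
  -- F1 : t = S1 + S2
  have hT : t * (∑ α, ∑ i, ω α i * (H α).mulVec e i) = t * t := by
    calc t * (∑ α, ∑ i, ω α i * (H α).mulVec e i)
        = ∑ α, ∑ i, ω α i * (t * (H α).mulVec e i) := by
          rw [Finset.mul_sum]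
          exact Finset.sum_congr rfl fun α _ => by
            rw [Finset.mul_sum]; exact Finset.sum_congr rfl fun i _ => by ring
      _ = ∑ α, ∑ i, ω α i * (H α).mulVec v i := by
          exact Finset.sum_congr rfl fun α _ => Finset.sum_congr rfl fun i _ => by
            rw [hHv α i]
      _ = ∑ α, ∑ i, (H α).mulVec (ω α) i * v i := by
          exact Finset.sum_congr rfl fun α _ => (aux_symm_shift (H α) (hsym α) (ω α) v).symm
      _ = ∑ i, v i * v i := by
          rw [Finset.sum_comm]
          exact Finset.sum_congr rfl fun i _ => by
            rw [← Finset.sum_mul, hvdef]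
      _ = t * t := by
          have : ∑ i, v i * v i = J := by
            rw [hJv]; exact Finset.sum_congr rfl fun i _ => (sq (v i)).symm ▸ by ring
          rw [this, ← ht2]; ring
  have hF1 : t = S1 + S2 := by
    have hTeq : (∑ α, ∑ i, ω α i * (H α).mulVec e i) = t :=
      mul_left_cancel₀ (ne_of_gt ht0) hT
    rw [← hTeq, hS1def, hS2def, ← Finset.sum_add_distrib]
    exact Finset.sum_congr rfl fun α _ => aux_inner e (ω α) ((H α).mulVec e) he
  -- F2 : A₂ + W₂ ≤ 1
  have hF2 : A₂ + W₂ ≤ 1 := by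
    have h1 : ∀ α, ∑ i, ω α i ^ 2 = a α ^ 2 + ∑ i, w α i ^ 2 := fun α =>
      aux_decomp e (ω α) he
    calc A₂ + W₂ = ∑ α, (a α ^ 2 + ∑ i, w α i ^ 2) := by
          rw [Finset.sum_add_distrib]
      _ = ∑ α, ∑ i, ω α i ^ 2 := Finset.sum_congr rfl fun α _ => (h1 α).symm
      _ ≤ 1 := hω
  -- F3 : H₂ + 2*U₂ ≤ J1
  have hF3 : H₂ + 2*U₂ ≤ J1 := by
    have h1 : ∀ α, hc α ^ 2 + 2 * ∑ i, u α i ^ 2 ≤ ∑ i, ∑ j, H α i j ^ 2 := fun α =>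
      aux_frob (H α) (hsym α) e he
    calc H₂ + 2*U₂ = ∑ α, (hc α ^ 2 + 2 * ∑ i, u α i ^ 2) := by
          rw [Finset.sum_add_distrib, Finset.mul_sum]
      _ ≤ ∑ α, ∑ i, ∑ j, H α i j ^ 2 := Finset.sum_le_sum fun α _ => h1 α
      _ = J1 := hJ1def.symm
  -- F4 : J0 = t^2 * A₂
  have hF4 : J0 = t^2 * A₂ := by
    rw [hJ0def, hA2def, Finset.mul_sum]
    refine Finset.sum_congr rfl fun α _ => ?_
    have h1 : ∑ i, ω α i * (∑ β, (H β).mulVec (ω β) i) = t * a α := by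
      rw [hadef, Finset.mul_sum]
      exact Finset.sum_congr rfl fun i _ => by
        rw [show (∑ β, (H β).mulVec (ω β) i) = v i from rfl, hve i]; ring
    rw [h1]; ring
  -- F6 : Cauchy-Schwarz
  have hCS1 : S1^2 ≤ A₂ * H₂ := Finset.sum_mul_sq_le_sq_mul_sq _ _ _
  have hCS2 : S2^2 ≤ W₂ * U₂ := by
    have h1 : S2 = ∑ p : Fin N × Fin n, w p.1 p.2 * u p.1 p.2 := by
      rw [hS2def, Fintype.sum_prod_type]
    have h2 : W₂ = ∑ p : Fin N × Fin n, w p.1 p.2 ^ 2 := by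
      rw [hW2def, Fintype.sum_prod_type]
    have h3 : U₂ = ∑ p : Fin N × Fin n, u p.1 p.2 ^ 2 := by
      rw [hU2def, Fintype.sum_prod_type]
    rw [h1, h2, h3]
    exact Finset.sum_mul_sq_le_sq_mul_sq _ _ _
  -- nonnegativity
  have hA2nn : 0 ≤ A₂ := by
    rw [hA2def]; exact Finset.sum_nonneg fun α _ => sq_nonneg _
  have hW2nn : 0 ≤ W₂ := by
    rw [hW2def]; exact Finset.sum_nonneg fun α _ => Finset.sum_nonneg fun i _ => sq_nonneg _
  have hH2nn : 0 ≤ H₂ := by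
    rw [hH2def]; exact Finset.sum_nonneg fun α _ => sq_nonneg _
  have hU2nn : 0 ≤ U₂ := by
    rw [hU2def]; exact Finset.sum_nonneg fun α _ => Finset.sum_nonneg fun i _ => sq_nonneg _
  obtain ⟨P1, P2⟩ := aux_scalar δ σ A₂ W₂ H₂ U₂ S1 S2 t J1 hδ0 hδ hσ
    hA2nn hW2nn hH2nn hU2nn hF2 hF3 hJ1le hF1 hCS1 hCS2
  rw [ht2] at hF4
  constructor
  · intro hd
    have h := P1 hd
    rw [ht2, ← hF4] at h
    exact h
  · intro hd
    have h := P2 hd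
    rw [ht2, ← hF4] at h
    exact h
end

section
/- Let p ∈ [1,2) and let u : Ω → ℝ be C² on an open set Ω ⊂ ℝⁿ. Then at every point where ∇u ≠ 0 and |∇u| is differentiable, |∇²u|² + 2(p−2)|∇|∇u||² + (p−2)² |(∇u/|∇u|)·(∇|∇u|)ᵀ|² ≥ (p−1)² |∇²u|², where ∇²u is the Hessian and |·| the Frobenius norm. -/
/-!
Write `H` for the Hessian of `u` at `x`, `ν = ∇u/|∇u|` and `v = ∇|∇u| = Hν`. Splitting
`H = Hννᵀ + H(I - ννᵀ)` and applying Cauchy–Schwarz to the columns of the second summand gives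
`|H|² ≥ |Hν|² + |νᵀH|² - (νᵀHν)²`, i.e. `|H|² ≥ 2|v|² - (ν·v)²` for the symmetric `H`; moreover
`(ν·v)² ≤ |v|²`. The difference of the two sides of the claim is
`(2 - p) (p (|H|² - 2|v|² + (ν·v)²) + 2 (p - 1) (|v|² - (ν·v)²)) ≥ 0`.
-/

noncomputable section

/-- Partial derivative of `f` at `x` in the `j`-th coordinate direction. -/
def pd {n : ℕ} (j : Fin n) (f : (Fin n → ℝ) → ℝ) (x : Fin n → ℝ) : ℝ :=
  fderiv ℝ f x (Pi.single j 1)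

open Matrix

section FrobeniusBound

variable {ι : Type*} [Fintype ι]

theorem dotProduct_self_sub_dotProduct_smul {r ν : ι → ℝ} (hν : ν ⬝ᵥ ν = 1) :
    (r - (r ⬝ᵥ ν) • ν) ⬝ᵥ (r - (r ⬝ᵥ ν) • ν) = r ⬝ᵥ r - (r ⬝ᵥ ν) ^ 2 := by
  simp only [sub_dotProduct, dotProduct_sub, smul_dotProduct, dotProduct_smul, smul_eq_mul,
    dotProduct_comm ν r, hν]
  ring

theorem vecMul_dotProduct_self_le_sum_sq {κ : Type*} [Fintype κ] (B : Matrix ι κ ℝ)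
    {ν : ι → ℝ} (hν : ν ⬝ᵥ ν = 1) :
    (ν ᵥ* B) ⬝ᵥ (ν ᵥ* B) ≤ ∑ i, ∑ j, B i j ^ 2 := by
  rw [Finset.sum_comm]
  refine Finset.sum_le_sum fun j _ => ?_
  have h := Finset.sum_mul_sq_le_sq_mul_sq Finset.univ ν (fun i => B i j)
  rwa [show ∑ i, ν i ^ 2 = 1 by simpa only [dotProduct, sq] using hν, one_mul, sq] at h

theorem sum_sq_eq_mulVec_add_sum_sq_sub_vecMulVec (A : Matrix ι ι ℝ) {ν : ι → ℝ}
    (hν : ν ⬝ᵥ ν = 1) :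
    ∑ i, ∑ j, A i j ^ 2
      = (A *ᵥ ν) ⬝ᵥ (A *ᵥ ν) + ∑ i, ∑ j, (A - vecMulVec (A *ᵥ ν) ν) i j ^ 2 := by
  rw [dotProduct, ← Finset.sum_add_distrib]
  refine Finset.sum_congr rfl fun i _ => ?_
  have hrow : (A - vecMulVec (A *ᵥ ν) ν) i = A i - (A i ⬝ᵥ ν) • ν := by
    ext j; simp [vecMulVec, mulVec]
  have h := dotProduct_self_sub_dotProduct_smul (r := A i) hν
  rw [← hrow] at h
  simp only [dotProduct, ← sq] at h
  rw [h]
  simp only [mulVec, dotProduct]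
  ring

theorem mulVec_add_vecMul_sub_le_sum_sq (A : Matrix ι ι ℝ) {ν : ι → ℝ} (hν : ν ⬝ᵥ ν = 1) :
    (A *ᵥ ν) ⬝ᵥ (A *ᵥ ν) + (ν ᵥ* A) ⬝ᵥ (ν ᵥ* A) - (ν ⬝ᵥ A *ᵥ ν) ^ 2
      ≤ ∑ i, ∑ j, A i j ^ 2 := by
  have hB : ν ᵥ* (A - vecMulVec (A *ᵥ ν) ν) = ν ᵥ* A - ((ν ᵥ* A) ⬝ᵥ ν) • ν := by
    rw [vecMul_sub, vecMul_vecMulVec, dotProduct_mulVec]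
  have h := vecMul_dotProduct_self_le_sum_sq (A - vecMulVec (A *ᵥ ν) ν) hν
  rw [hB, dotProduct_self_sub_dotProduct_smul hν] at h
  rw [sum_sq_eq_mulVec_add_sum_sq_sub_vecMulVec A hν, dotProduct_mulVec ν A ν]
  linarith

end FrobeniusBound

theorem ContDiffAt.differentiableAt_fderiv {E F : Type*} [NormedAddCommGroup E]
    [NormedSpace ℝ E] [NormedAddCommGroup F] [NormedSpace ℝ F] {f : E → F} {x : E}
    (hf : ContDiffAt ℝ 2 f x) : DifferentiableAt ℝ (fderiv ℝ f) x :=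
  (hf.fderiv_right (m := 1) le_rfl).differentiableAt one_ne_zero

theorem HasFDerivAt.sqrt_sum_sq {E ι : Type*} [NormedAddCommGroup E] [NormedSpace ℝ E]
    [Fintype ι] {f : ι → E → ℝ} {f' : ι → E →L[ℝ] ℝ} {x : E}
    (hf : ∀ i, HasFDerivAt (f i) (f' i) x) (hx : ∑ i, f i x ^ 2 ≠ 0) :
    HasFDerivAt (fun y => √(∑ i, f i y ^ 2))
      (∑ i, (f i x / √(∑ i, f i x ^ 2)) • f' i) x := by
  have hsum : HasFDerivAt (fun y => ∑ i, f i y ^ 2) (∑ i, (2 * f i x) • f' i) x :=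
    HasFDerivAt.fun_sum fun i _ => by
      simpa [pow_two, two_mul, add_smul] using (hf i).fun_mul (hf i)
  convert hsum.sqrt hx using 1
  rw [Finset.smul_sum]
  refine Finset.sum_congr rfl fun i _ => ?_
  rw [smul_smul]
  congr 1
  field_simp

section SecondPartials

variable {n : ℕ} {u : (Fin n → ℝ) → ℝ} {x : Fin n → ℝ}

theorem hasFDerivAt_pd (hu : DifferentiableAt ℝ (fderiv ℝ u) x) (j : Fin n) :
    HasFDerivAt (fun y => pd j u y)
      ((ContinuousLinearMap.apply ℝ ℝ (Pi.single j 1)).comp (fderiv ℝ (fderiv ℝ u) x)) x :=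
  (ContinuousLinearMap.apply ℝ ℝ (Pi.single j 1 : Fin n → ℝ)).hasFDerivAt.comp x hu.hasFDerivAt

theorem pd_pd_eq (hu : DifferentiableAt ℝ (fderiv ℝ u) x) (i j : Fin n) :
    pd i (fun y => pd j u y) x = fderiv ℝ (fderiv ℝ u) x (Pi.single i 1) (Pi.single j 1) := by
  rw [pd, (hasFDerivAt_pd hu j).fderiv]
  rfl

theorem pd_pd_comm (hu : ContDiffAt ℝ 2 u x) (i j : Fin n) :
    pd i (fun y => pd j u y) x = pd j (fun y => pd i u y) x := by
  rw [pd_pd_eq hu.differentiableAt_fderiv, pd_pd_eq hu.differentiableAt_fderiv]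
  exact hu.isSymmSndFDerivAt (by simp) _ _

theorem pd_sqrt_sum_sq_pd (hu : DifferentiableAt ℝ (fderiv ℝ u) x)
    (hx : ∑ i, pd i u x ^ 2 ≠ 0) (j : Fin n) :
    pd j (fun y => √(∑ i, pd i u y ^ 2)) x
      = ∑ i, pd i u x / √(∑ i, pd i u x ^ 2) * pd j (fun y => pd i u y) x := by
  have hpd i := (hasFDerivAt_pd hu i).differentiableAt.hasFDerivAt
  rw [pd, (HasFDerivAt.sqrt_sum_sq hpd hx).fderiv]
  simp [pd]

end SecondPartials

theorem sub_one_sq_mul_le_of_le {p a b s : ℝ} (hp1 : 1 ≤ p) (hp2 : p ≤ 2)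
    (ha : 2 * b - s ^ 2 ≤ a) (hs : s ^ 2 ≤ b) :
    (p - 1) ^ 2 * a ≤ a + 2 * (p - 2) * b + (p - 2) ^ 2 * s ^ 2 := by
  have hp0 : 0 ≤ p := by linarith
  nlinarith [mul_nonneg (mul_nonneg (sub_nonneg.2 hp2) hp0) (sub_nonneg.2 ha),
    mul_nonneg (mul_nonneg (sub_nonneg.2 hp2) (sub_nonneg.2 hp1)) (sub_nonneg.2 hs)]

theorem stmt8_general {n : ℕ} (p : ℝ) (hp1 : 1 ≤ p) (hp2 : p < 2)
    (Ω : Set (Fin n → ℝ)) (hΩ : IsOpen Ω)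
    (u : (Fin n → ℝ) → ℝ) (hu : ContDiffOn ℝ 2 u Ω)
    (gn : (Fin n → ℝ) → ℝ)
    (hgn : ∀ y, gn y = Real.sqrt (∑ j, (pd j u y) ^ 2)) :
    ∀ x ∈ Ω, (∃ j, pd j u x ≠ 0) → DifferentiableAt ℝ gn x →
      (p - 1) ^ 2 * (∑ i, ∑ j, (pd i (fun y => pd j u y) x) ^ 2)
        ≤ (∑ i, ∑ j, (pd i (fun y => pd j u y) x) ^ 2)
          + 2 * (p - 2) * (∑ j, (pd j gn x) ^ 2)
          + (p - 2) ^ 2 * (∑ j, (pd j u x / gn x) * pd j gn x) ^ 2 := by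
  intro x hx ⟨j₀, hj₀⟩ _
  obtain rfl : gn = fun y => √(∑ j, pd j u y ^ 2) := funext hgn
  have hu2 : ContDiffAt ℝ 2 u x := hu.contDiffAt (hΩ.mem_nhds hx)
  have hpos : 0 < ∑ j, pd j u x ^ 2 :=
    Finset.sum_pos' (fun j _ => sq_nonneg _) ⟨j₀, Finset.mem_univ _, by positivity⟩
  set H : Matrix (Fin n) (Fin n) ℝ := fun i j => pd i (fun y => pd j u y) x
  set ν : Fin n → ℝ := fun j => pd j u x / √(∑ j, pd j u x ^ 2)
  have hν : ν ⬝ᵥ ν = 1 := by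
    simp only [ν, dotProduct, ← sq, div_pow, ← Finset.sum_div, Real.sq_sqrt hpos.le]
    exact div_self hpos.ne'
  have hgrad : (fun j => pd j (fun y => √(∑ j, pd j u y ^ 2)) x) = H *ᵥ ν := by
    ext j
    rw [pd_sqrt_sum_sq_pd hu2.differentiableAt_fderiv hpos.ne' j]
    exact Finset.sum_congr rfl fun i _ => mul_comm _ _
  have hsymm : ν ᵥ* H = H *ᵥ ν := by
    rw [← mulVec_transpose]
    congr 1
    ext i j
    exact pd_pd_comm hu2 j i
  have hfrob := mulVec_add_vecMul_sub_le_sum_sq H hν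
  have hcs := Finset.sum_mul_sq_le_sq_mul_sq Finset.univ ν (H *ᵥ ν)
  rw [hsymm] at hfrob
  rw [← hgrad] at hfrob hcs
  simp only [dotProduct, ← sq] at hfrob hν
  rw [hν, one_mul] at hcs
  exact sub_one_sq_mul_le_of_le hp1 hp2.le (by linarith) hcs

theorem stmt8 {n : ℕ} (hn : 2 ≤ n) (p : ℝ) (hp1 : 1 ≤ p) (hp2 : p < 2)
    (Ω : Set (Fin n → ℝ)) (hΩ : IsOpen Ω)
    (u : (Fin n → ℝ) → ℝ) (hu : ContDiffOn ℝ 2 u Ω)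
    (gn : (Fin n → ℝ) → ℝ)
    (hgn : ∀ y, gn y = Real.sqrt (∑ j, (pd j u y) ^ 2)) :
    ∀ x ∈ Ω, (∃ j, pd j u x ≠ 0) → DifferentiableAt ℝ gn x →
      (p - 1) ^ 2 * (∑ i, ∑ j, (pd i (fun y => pd j u y) x) ^ 2)
        ≤ (∑ i, ∑ j, (pd i (fun y => pd j u y) x) ^ 2)
          + 2 * (p - 2) * (∑ j, (pd j gn x) ^ 2)
          + (p - 2) ^ 2 * (∑ j, (pd j u x / gn x) * pd j gn x) ^ 2 :=
  stmt8_general p hp1 hp2 Ω hΩ u hu gn hgn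
end
end

section
/- Let a ∈ C¹((0,∞)) be positive with i_a = inf_{t>0} t a'(t)/a(t) ≥ −1, and suppose b(t) = a(t)t extends to a C¹ function on [0,∞) with b(0)=0. Let u ∈ C³(Ω, ℝᴺ). Then on {∇u ≠ 0}: |div(a(|∇u|)∇u)|² = div[a(|∇u|)²((Δu)ᵀ∇u − (1/2)∇|∇u|²)] + a(|∇u|)²[|∇²u|² + 2Q(|∇u|)|∇|∇u||² + Q(|∇u|)²|(∇u/|∇u|)(∇|∇u|)ᵀ|²], where Q(t) = t a'(t)/a(t). -/
/-!
Write `A = a(|∇u|)` and `W = (Δu)ᵀ∇u - ½∇|∇u|²`. The product and chain rules give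
`div(A∇u^α) = a'(|∇u|) ∇|∇u|·∇u^α + A Δu^α` and `div(A² W) = 2A a'(|∇u|) ∇|∇u|·W + A² div W`,
and the symmetry of third derivatives gives the Bochner-type identity `div W = |Δu|² - |∇²u|²`.
What is left is a pointwise algebraic identity, in which `A Q(|∇u|) = |∇u| a'(|∇u|)` turns
the `Q`-terms into the `a'`-terms.
-/

noncomputable section

open Finset Filter Topology

section PartialDerivative

variable {n : ℕ} {f g : (Fin n → ℝ) → ℝ} {x : Fin n → ℝ} {i j k : Fin n}

theorem pd_congr (h : f =ᶠ[𝓝 x] g) : pd j f x = pd j g x := by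
  rw [pd, pd, h.fderiv_eq]

theorem pd_sub (hf : DifferentiableAt ℝ f x) (hg : DifferentiableAt ℝ g x) :
    pd j (fun y => f y - g y) x = pd j f x - pd j g x := by
  simp [pd, fderiv_fun_sub hf hg]

theorem pd_mul (hf : DifferentiableAt ℝ f x) (hg : DifferentiableAt ℝ g x) :
    pd j (fun y => f y * g y) x = pd j f x * g x + f x * pd j g x := by
  simp only [pd, fderiv_fun_mul hf hg, add_apply, smul_apply, smul_eq_mul]
  ring

theorem pd_const_mul (c : ℝ) (hf : DifferentiableAt ℝ f x) :
    pd j (fun y => c * f y) x = c * pd j f x := by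
  simp [pd, fderiv_const_mul hf]

theorem pd_sum {ι : Type*} {s : Finset ι} {F : ι → (Fin n → ℝ) → ℝ}
    (hF : ∀ i ∈ s, DifferentiableAt ℝ (F i) x) :
    pd j (fun y => ∑ i ∈ s, F i y) x = ∑ i ∈ s, pd j (F i) x := by
  simp [pd, fderiv_fun_sum hF]

theorem pd_comp {φ : ℝ → ℝ} (hφ : DifferentiableAt ℝ φ (f x)) (hf : DifferentiableAt ℝ f x) :
    pd j (fun y => φ (f y)) x = deriv φ (f x) * pd j f x := by
  have h : HasFDerivAt (fun y => φ (f y)) (deriv φ (f x) • fderiv ℝ f x) x :=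
    hφ.hasDerivAt.comp_hasFDerivAt x hf.hasFDerivAt
  simp [pd, h.fderiv]

theorem pd_sq (hf : DifferentiableAt ℝ f x) :
    pd j (fun y => f y ^ 2) x = 2 * f x * pd j f x := by
  simp_rw [sq, pd_mul hf hf]
  ring

theorem pd_sqrt (hf : DifferentiableAt ℝ f x) (hx : 0 < f x) :
    pd j (fun y => √(f y)) x = pd j f x / (2 * √(f x)) := by
  rw [pd_comp (Real.hasDerivAt_sqrt hx.ne').differentiableAt hf,
    (Real.hasDerivAt_sqrt hx.ne').deriv, one_div_mul_eq_div]

theorem differentiableAt_of_eq_sqrt {s : (Fin n → ℝ) → ℝ} (hg : ∀ y, g y = √(s y))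
    (hs : DifferentiableAt ℝ s x) (hx : 0 < s x) : DifferentiableAt ℝ g x :=
  ((Real.hasDerivAt_sqrt hx.ne').differentiableAt.comp x hs).congr_of_eventuallyEq
    (Eventually.of_forall hg)

theorem pd_eq_two_mul_mul_pd_of_eq_sqrt {s : (Fin n → ℝ) → ℝ} (hg : ∀ y, g y = √(s y))
    (hs : DifferentiableAt ℝ s x) (hx : 0 < s x) : pd j s x = 2 * g x * pd j g x := by
  rw [pd_congr (Eventually.of_forall hg), pd_sqrt hs hx, hg x]
  field_simp

theorem contDiffAt_pd {m l : WithTop ℕ∞} (hf : ContDiffAt ℝ l f x) (hml : m + 1 ≤ l) :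
    ContDiffAt ℝ m (pd j f) x :=
  (hf.fderiv_right hml).clm_apply contDiffAt_const

theorem differentiableAt_pd (hf : ContDiffAt ℝ 2 f x) : DifferentiableAt ℝ (pd j f) x :=
  (contDiffAt_pd (m := 1) hf (by norm_num)).differentiableAt one_ne_zero

theorem pd_comm (hf : ContDiffAt ℝ 2 f x) : pd i (pd j f) x = pd j (pd i f) x := by
  have hd : DifferentiableAt ℝ (fderiv ℝ f) x :=
    (hf.fderiv_right (m := 1) le_rfl).differentiableAt one_ne_zero
  unfold pd
  simp [fderiv_clm_apply hd (differentiableAt_const _), (hf.isSymmSndFDerivAt (by simp)).eq]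

theorem pd_pd_pd_comm (hf : ContDiffAt ℝ 3 f x) :
    pd j (pd k (pd k f)) x = pd k (pd k (pd j f)) x := by
  have hC2 : ∀ᶠ y in 𝓝 x, ContDiffAt ℝ 2 f y :=
    (hf.eventually (by simp)).mono fun y hy => hy.of_le (by norm_num)
  calc pd j (pd k (pd k f)) x = pd k (pd j (pd k f)) x := pd_comm (contDiffAt_pd hf (by norm_num))
    _ = pd k (pd k (pd j f)) x := pd_congr (hC2.mono fun y hy => pd_comm hy)

theorem sum_pd_mul {V : Fin n → (Fin n → ℝ) → ℝ} (hf : DifferentiableAt ℝ f x) (hV : ∀ j, DifferentiableAt ℝ (V j) x) :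
    ∑ j, pd j (fun y => f y * V j y) x = ∑ j, pd j f x * V j x + f x * ∑ j, pd j (V j) x := by
  simp only [pd_mul hf (hV _), sum_add_distrib, mul_sum]

theorem pd_sum_sum_sq {ι κ : Type*} [Fintype ι] [Fintype κ]
    {F : ι → κ → (Fin n → ℝ) → ℝ} (hF : ∀ i k, DifferentiableAt ℝ (F i k) x) :
    pd j (fun y => ∑ i, ∑ k, F i k y ^ 2) x = ∑ i, ∑ k, 2 * F i k x * pd j (F i k) x := by
  rw [pd_sum fun i _ => DifferentiableAt.fun_sum fun k _ => (hF i k).fun_pow 2]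
  refine sum_congr rfl fun i _ => ?_
  rw [pd_sum fun k _ => (hF i k).fun_pow 2]
  exact sum_congr rfl fun k _ => pd_sq (hF i k)

end PartialDerivative

section Bochner

variable {n : ℕ} {x : Fin n → ℝ} {j : Fin n} {ι : Type*} [Fintype ι]
  {u : ι → (Fin n → ℝ) → ℝ}

theorem contDiffAt_sum_sum_sq_pd (hu : ∀ β, ContDiffAt ℝ 3 (u β) x) :
    ContDiffAt ℝ 2 (fun y => ∑ β, ∑ k, pd k (u β) y ^ 2) x :=
  ContDiffAt.sum fun β _ => ContDiffAt.sum fun k _ => (contDiffAt_pd (hu β) (by norm_num)).pow 2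

theorem differentiableAt_sum_laplacian_mul_pd (hu : ∀ β, ContDiffAt ℝ 3 (u β) x) :
    DifferentiableAt ℝ (fun y => ∑ β, (∑ k, pd k (pd k (u β)) y) * pd j (u β) y) x :=
  DifferentiableAt.fun_sum fun β _ =>
    (DifferentiableAt.fun_sum fun k _ =>
      differentiableAt_pd (contDiffAt_pd (hu β) (by norm_num))).fun_mul
      (differentiableAt_pd ((hu β).of_le (by norm_num)))

theorem sum_pd_sum_laplacian_mul_pd (hu : ∀ β, ContDiffAt ℝ 3 (u β) x) :
    ∑ j, pd j (fun y => ∑ β, (∑ k, pd k (pd k (u β)) y) * pd j (u β) y) x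
      = ∑ β, ∑ j, ∑ k, pd j (pd j (pd k (u β))) x * pd k (u β) x
        + ∑ β, (∑ k, pd k (pd k (u β)) x) ^ 2 := by
  have hpd : ∀ β j, DifferentiableAt ℝ (pd j (u β)) x := fun β j =>
    differentiableAt_pd ((hu β).of_le (by norm_num))
  have hpdpd : ∀ β j k, DifferentiableAt ℝ (pd j (pd k (u β))) x := fun β j k =>
    differentiableAt_pd (contDiffAt_pd (hu β) (by norm_num))
  have hL : ∀ β, DifferentiableAt ℝ (fun y => ∑ k, pd k (pd k (u β)) y) x := fun β =>
    DifferentiableAt.fun_sum fun k _ => hpdpd β k k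
  rw [sum_congr rfl fun j _ => pd_sum fun β _ => (hL β).fun_mul (hpd β j), sum_comm,
    ← sum_add_distrib]
  refine sum_congr rfl fun β _ => ?_
  rw [sum_pd_mul (hL β) (hpd β), ← sq]
  congr 1
  conv_rhs => rw [sum_comm]
  refine sum_congr rfl fun j _ => ?_
  rw [pd_sum fun k _ => hpdpd β k k, sum_mul]
  exact sum_congr rfl fun k _ => by rw [pd_pd_pd_comm (hu β)]

theorem sum_pd_pd_sum_sum_sq_pd (hu : ∀ β, ContDiffAt ℝ 3 (u β) x) :
    ∑ j, pd j (pd j (fun y => ∑ β, ∑ k, pd k (u β) y ^ 2)) x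
      = 2 * ∑ β, ∑ j, ∑ k, pd j (pd k (u β)) x ^ 2
        + 2 * ∑ β, ∑ j, ∑ k, pd j (pd j (pd k (u β))) x * pd k (u β) x := by
  have hpd : ∀ β k, DifferentiableAt ℝ (pd k (u β)) x := fun β k =>
    differentiableAt_pd ((hu β).of_le (by norm_num))
  have hpdpd : ∀ β j k, DifferentiableAt ℝ (pd j (pd k (u β))) x := fun β j k =>
    differentiableAt_pd (contDiffAt_pd (hu β) (by norm_num))
  have hgrad : ∀ j, pd j (fun y => ∑ β, ∑ k, pd k (u β) y ^ 2)
      =ᶠ[𝓝 x] fun y => ∑ β, ∑ k, 2 * pd k (u β) y * pd j (pd k (u β)) y := by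
    intro j
    filter_upwards [eventually_all.2 fun β => (hu β).eventually (by simp)] with y hy
    exact pd_sum_sum_sq fun β k => differentiableAt_pd ((hy β).of_le (by norm_num))
  simp only [mul_sum, ← sum_add_distrib]
  rw [sum_comm]
  refine sum_congr rfl fun j _ => ?_
  rw [pd_congr (hgrad j), pd_sum fun β _ => DifferentiableAt.fun_sum fun k _ =>
    ((hpd β k).const_mul 2).fun_mul (hpdpd β j k)]
  refine sum_congr rfl fun β _ => ?_
  rw [pd_sum fun k _ => ((hpd β k).const_mul 2).fun_mul (hpdpd β j k)]
  refine sum_congr rfl fun k _ => ?_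
  rw [pd_mul ((hpd β k).const_mul 2) (hpdpd β j k), pd_const_mul 2 (hpd β k)]
  ring

theorem differentiableAt_sum_laplacian_mul_pd_sub (hu : ∀ β, ContDiffAt ℝ 3 (u β) x) :
    DifferentiableAt ℝ (fun y => ∑ β, (∑ k, pd k (pd k (u β)) y) * pd j (u β) y
        - 1 / 2 * pd j (fun z => ∑ β, ∑ k, pd k (u β) z ^ 2) y) x :=
  (differentiableAt_sum_laplacian_mul_pd hu).sub
    ((differentiableAt_pd (contDiffAt_sum_sum_sq_pd hu)).const_mul _)

theorem sum_pd_bochner (hu : ∀ β, ContDiffAt ℝ 3 (u β) x) :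
    ∑ j, pd j (fun y => ∑ β, (∑ k, pd k (pd k (u β)) y) * pd j (u β) y
        - 1 / 2 * pd j (fun z => ∑ β, ∑ k, pd k (u β) z ^ 2) y) x
      = ∑ β, (∑ k, pd k (pd k (u β)) x) ^ 2 - ∑ β, ∑ i, ∑ j, pd i (pd j (u β)) x ^ 2 := by
  have hgradSq : ∀ j, DifferentiableAt ℝ (pd j (fun z => ∑ β, ∑ k, pd k (u β) z ^ 2)) x :=
    fun j => differentiableAt_pd (contDiffAt_sum_sum_sq_pd hu)
  rw [sum_congr rfl fun j _ =>
    pd_sub (differentiableAt_sum_laplacian_mul_pd hu) ((hgradSq j).const_mul _)]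
  simp only [pd_const_mul _ (hgradSq _), sum_sub_distrib, ← mul_sum,
    sum_pd_sum_laplacian_mul_pd hu, sum_pd_pd_sum_sum_sq_pd hu]
  ring

end Bochner

-- `A = a(|∇u|)`, `A' = a'(|∇u|)`, `g = |∇u|`, `q = Q(|∇u|)`, `p = ∇u`, `G = ∇|∇u|`, `L = Δu`,
-- `H = |∇²u|²`.
theorem sum_sq_add_mul_eq {ι κ : Type*} [Fintype ι] [Fintype κ] {A A' g q : ℝ} (hg : g ≠ 0)
    (hq : A * q = g * A') (p : ι → κ → ℝ) (G : κ → ℝ) (L : ι → ℝ) (H : ℝ) :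
    ∑ α, (∑ j, A' * G j * p α j + A * L α) ^ 2
      = ∑ j, 2 * A * (A' * G j) * (∑ β, L β * p β j - 1 / 2 * (2 * g * G j))
        + A ^ 2 * (∑ β, L β ^ 2 - H)
        + A ^ 2 * (H + 2 * q * ∑ j, G j ^ 2 + q ^ 2 * ∑ α, (∑ j, p α j / g * G j) ^ 2) := by
  set D : ι → ℝ := fun α => ∑ j, G j * p α j
  have hlhs : ∑ α, (∑ j, A' * G j * p α j + A * L α) ^ 2
      = A' ^ 2 * ∑ α, D α ^ 2 + 2 * A * A' * ∑ α, L α * D α + A ^ 2 * ∑ α, L α ^ 2 := by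
    have hAD : ∀ α, ∑ j, A' * G j * p α j = A' * D α := fun α => by
      simp only [D, mul_sum, mul_assoc]
    simp only [hAD, mul_sum, ← sum_add_distrib]
    exact sum_congr rfl fun α _ => by ring
  have hflux : ∑ j, 2 * A * (A' * G j) * (∑ β, L β * p β j - 1 / 2 * (2 * g * G j))
      = 2 * A * A' * ∑ α, L α * D α - 2 * A * A' * g * ∑ j, G j ^ 2 := by
    simp only [D, mul_sub, sum_sub_distrib, mul_sum]
    rw [sum_comm]
    congr 1 <;> refine sum_congr rfl fun _ _ => ?_
    · exact sum_congr rfl fun _ _ => by ring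
    · ring
  have hdiv : ∑ α, (∑ j, p α j / g * G j) ^ 2 = (∑ α, D α ^ 2) / g ^ 2 := by
    rw [sum_div]
    refine sum_congr rfl fun α _ => ?_
    rw [← div_pow, sum_div]
    exact congrArg (· ^ 2) (sum_congr rfl fun j _ => by ring)
  have hq2 : A ^ 2 * q ^ 2 * ((∑ α, D α ^ 2) / g ^ 2) = A' ^ 2 * ∑ α, D α ^ 2 := by
    rw [← mul_pow, hq]
    field_simp
  rw [hlhs, hflux, hdiv]
  linear_combination -2 * A * (∑ j, G j ^ 2) * hq - hq2

theorem stmt12_general {n N : ℕ}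
    (Ω : Set (Fin n → ℝ)) (hΩ : IsOpen Ω)
    (u : Fin N → (Fin n → ℝ) → ℝ)
    (hu : ∀ α, ContDiffOn ℝ 3 (u α) Ω)
    (a : ℝ → ℝ) (ha : ContDiffOn ℝ 1 a (Set.Ioi 0))
    (hapos : ∀ t > 0, 0 < a t)
    (Q : ℝ → ℝ) (hQ : ∀ t > 0, Q t = t * deriv a t / a t)
    (gn : (Fin n → ℝ) → ℝ)
    (hgn : ∀ y, gn y = Real.sqrt (∑ α, ∑ j, (pd j (u α) y) ^ 2)) :
    ∀ x ∈ Ω, gn x ≠ 0 →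
      ∑ α, (∑ j, pd j (fun y => a (gn y) * pd j (u α) y) x) ^ 2
        = (∑ j, pd j (fun y => (a (gn y)) ^ 2 *
              ((∑ β, (∑ k, pd k (fun z => pd k (u β) z) y) * pd j (u β) y)
                - (1/2) * pd j (fun z => ∑ β, ∑ k, (pd k (u β) z) ^ 2) y)) x)
          + (a (gn x)) ^ 2 *
            ((∑ α, ∑ i, ∑ j, (pd i (fun y => pd j (u α) y) x) ^ 2)
              + 2 * Q (gn x) * (∑ j, (pd j gn x) ^ 2)
              + Q (gn x) ^ 2 * ∑ α, (∑ j, (pd j (u α) x / gn x) * pd j gn x) ^ 2) := by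
  intro x hx hx0
  have hu3 : ∀ α, ContDiffAt ℝ 3 (u α) x := fun α => (hu α).contDiffAt (hΩ.mem_nhds hx)
  have hs := (contDiffAt_sum_sum_sq_pd hu3).differentiableAt two_ne_zero
  have hgnx : 0 < gn x := (hgn x ▸ Real.sqrt_nonneg _).lt_of_ne' hx0
  have hsx := Real.sqrt_pos.1 (hgn x ▸ hgnx)
  have hgnd := differentiableAt_of_eq_sqrt hgn hs hsx
  have had : DifferentiableAt ℝ a (gn x) :=
    (ha.differentiableOn one_ne_zero).differentiableAt (isOpen_Ioi.mem_nhds hgnx)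
  have hagn : DifferentiableAt ℝ (fun y => a (gn y)) x := had.comp x hgnd
  simp only [fun α => sum_pd_mul hagn fun j =>
    differentiableAt_pd (j := j) ((hu3 α).of_le (by norm_num))]
  rw [sum_pd_mul (hagn.fun_pow 2) fun j => differentiableAt_sum_laplacian_mul_pd_sub (j := j) hu3,
    sum_pd_bochner hu3]
  simp only [pd_sq hagn, pd_comp had hgnd, pd_eq_two_mul_mul_pd_of_eq_sqrt hgn hs hsx]
  exact sum_sq_add_mul_eq hx0 (by rw [hQ _ hgnx]; field_simp [(hapos _ hgnx).ne']) _ _ _ _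

theorem stmt12 {n N : ℕ} (hn : 2 ≤ n) (hN : 1 ≤ N)
    (Ω : Set (Fin n → ℝ)) (hΩ : IsOpen Ω)
    (u : Fin N → (Fin n → ℝ) → ℝ)
    (hu : ∀ α, ContDiffOn ℝ 3 (u α) Ω)
    (a : ℝ → ℝ) (ha : ContDiffOn ℝ 1 a (Set.Ioi 0))
    (hapos : ∀ t > 0, 0 < a t)
    (hia : ∀ t > 0, -1 ≤ t * deriv a t / a t)
    (b : ℝ → ℝ) (hb : ∀ t > 0, b t = a t * t) (hb0 : b 0 = 0)
    (hbC1 : ContDiffOn ℝ 1 b (Set.Ici 0))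
    (Q : ℝ → ℝ) (hQ : ∀ t > 0, Q t = t * deriv a t / a t)
    (gn : (Fin n → ℝ) → ℝ)
    (hgn : ∀ y, gn y = Real.sqrt (∑ α, ∑ j, (pd j (u α) y) ^ 2)) :
    ∀ x ∈ Ω, gn x ≠ 0 →
      ∑ α, (∑ j, pd j (fun y => a (gn y) * pd j (u α) y) x) ^ 2
        = (∑ j, pd j (fun y => (a (gn y)) ^ 2 *
              ((∑ β, (∑ k, pd k (fun z => pd k (u β) z) y) * pd j (u β) y)
                - (1/2) * pd j (fun z => ∑ β, ∑ k, (pd k (u β) z) ^ 2) y)) x)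
          + (a (gn x)) ^ 2 *
            ((∑ α, ∑ i, ∑ j, (pd i (fun y => pd j (u α) y) x) ^ 2)
              + 2 * Q (gn x) * (∑ j, (pd j gn x) ^ 2)
              + Q (gn x) ^ 2 * ∑ α, (∑ j, (pd j (u α) x / gn x) * pd j gn x) ^ 2) :=
  stmt12_general Ω hΩ u hu a ha hapos Q hQ gn hgn
end
end

section
/- Let a : (0,∞) → (0,∞) be C¹ with i_a = inf t a'(t)/a(t) > −1 and s_a = sup t a'(t)/a(t) < ∞. For ε > 0 define a_ε(t) = a(√(t²+ε²)) on [0,∞). Then i_{a_ε} ≥ min{i_a, 0} and s_{a_ε} ≤ max{s_a, 0}, where i_{a_ε} = inf_{t>0} t a_ε'(t)/a_ε(t) and s_{a_ε} = sup_{t>0} t a_ε'(t)/a_ε(t). -/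
/-!
With `s = √(t² + ε²)`, the index quotient of `a_ε` at `t` is `(t / s)² · q`, where
`q = s a'(s) / a(s)` is the index quotient of `a` at `s`. Since `0 < t ≤ s`, the factor
`(t / s)²` lies in `[0, 1]`, and scaling by such a factor moves `q` towards `0`: it can
leave `[i_a, s_a]` only into `[min i_a 0, max s_a 0]`.
-/

section ScaleTowardsZero

variable {α : Type*} [Ring α] [LinearOrder α] [IsStrictOrderedRing α] {c q b : α}

theorem min_zero_le_mul_of_le (hc₀ : 0 ≤ c) (hc₁ : c ≤ 1) (hq : b ≤ q) :
    min b 0 ≤ c * q := by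
  rcases le_total 0 q with hq₀ | hq₀
  · exact (min_le_right b 0).trans (mul_nonneg hc₀ hq₀)
  · calc min b 0 ≤ q := (min_le_left b 0).trans hq
      _ = 1 * q := (one_mul q).symm
      _ ≤ c * q := mul_le_mul_of_nonpos_right hc₁ hq₀

theorem mul_le_max_zero_of_le (hc₀ : 0 ≤ c) (hc₁ : c ≤ 1) (hq : q ≤ b) :
    c * q ≤ max b 0 := by
  rcases le_total q 0 with hq₀ | hq₀
  · exact (mul_nonpos_of_nonneg_of_nonpos hc₀ hq₀).trans (le_max_right b 0)
  · calc c * q ≤ 1 * q := mul_le_mul_of_nonneg_right hc₁ hq₀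
      _ = q := one_mul q
      _ ≤ max b 0 := hq.trans (le_max_left b 0)

end ScaleTowardsZero

theorem div_sqrt_sq_add_sq_mem_Icc {t : ℝ} (ht : 0 ≤ t) (ε : ℝ) :
    t / √(t ^ 2 + ε ^ 2) ∈ Set.Icc 0 1 :=
  ⟨by positivity, div_le_one_of_le₀
    (Real.le_sqrt_of_sq_le (le_add_of_nonneg_right (sq_nonneg ε))) (Real.sqrt_nonneg _)⟩

theorem mul_mul_div_div_eq_div_sq_mul {K : Type*} [Field K] (t d s A : K) (hs : s ≠ 0) :
    t * (d * (t / s)) / A = (t / s) ^ 2 * (s * d / A) := by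
  field_simp

theorem stmt15_general (a a' : ℝ → ℝ) (ia sa ε : ℝ)
    (h1 : ∀ t > 0, ia ≤ t * a' t / a t)
    (h2 : ∀ t > 0, t * a' t / a t ≤ sa) :
    ∀ t > 0,
      min ia 0 ≤
        t * (a' (Real.sqrt (t^2 + ε^2)) * (t / Real.sqrt (t^2 + ε^2)))
          / a (Real.sqrt (t^2 + ε^2)) ∧
      t * (a' (Real.sqrt (t^2 + ε^2)) * (t / Real.sqrt (t^2 + ε^2)))
          / a (Real.sqrt (t^2 + ε^2)) ≤ max sa 0 := by
  intro t ht
  set s := √(t ^ 2 + ε ^ 2)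
  have hs : 0 < s := Real.sqrt_pos.mpr (by positivity)
  obtain ⟨hc₀, hc₁⟩ := div_sqrt_sq_add_sq_mem_Icc ht.le ε
  rw [mul_mul_div_div_eq_div_sq_mul _ _ _ _ hs.ne']
  exact ⟨min_zero_le_mul_of_le (by positivity) (pow_le_one₀ hc₀ hc₁) (h1 s hs),
    mul_le_max_zero_of_le (by positivity) (pow_le_one₀ hc₀ hc₁) (h2 s hs)⟩

theorem stmt15 (a a' : ℝ → ℝ) (ia sa ε : ℝ) (hε : 0 < ε)
    (hpos : ∀ t > 0, 0 < a t)
    (hderiv : ∀ t > 0, HasDerivAt a (a' t) t)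
    (hia : -1 < ia)
    (h1 : ∀ t > 0, ia ≤ t * a' t / a t)
    (h2 : ∀ t > 0, t * a' t / a t ≤ sa) :
    ∀ t > 0,
      min ia 0 ≤
        t * (a' (Real.sqrt (t^2 + ε^2)) * (t / Real.sqrt (t^2 + ε^2)))
          / a (Real.sqrt (t^2 + ε^2)) ∧
      t * (a' (Real.sqrt (t^2 + ε^2)) * (t / Real.sqrt (t^2 + ε^2)))
          / a (Real.sqrt (t^2 + ε^2)) ≤ max sa 0 :=
  stmt15_general a a' ia sa ε h1 h2
end
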